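/- arXiv:1605.04434 — 6 statements merged into one kernel-verified Lean document; each statement's English description precedes it below -/
import Mathlib

section
/- Let G be a connected undirected graph and s,t ∈ V. The bridge links e_1,…,e_r separating s from t decompose G into r+1 connected components C_1,…,C_{r+1} (after removing e_1,…,e_r), which can be ordered so that s ∈ C_1, t ∈ C_{r+1}, and each e_l joins a node of C_l to a node of C_{l+1}. Every s-t path traverses e_1,…,e_r in this order. -/
/-!
For an edge `f` separating `s` from `t`, the graph `G - f` has exactly two components, and the
near side `N f` (the one containing `s`) determines `f`. The near sides form a chain: if an
endpoint `a` of `f` lies outside `N g`, every walk inside `N g` avoids `f`, so `N g ⊆ N f`; if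
`a` lies in `N g`, every walk inside the far side of `g` (which contains `t`) avoids `f`, so
`N f ⊆ N g`. List the separating edges along this chain as `e₀, …, e_{r-1}` and call the number
of `eᵢ` with `v ∉ N eᵢ` the level of `v`. It is `i` and `i + 1` at the two ends of `eᵢ`, does
not change across other edges, and tells the components of `G` minus all separating edges
apart, because a path whose ends lie on the same side of `eᵢ` cannot cross `eᵢ`. So a walk from
`s` (level `0`) to `t` (level `r`) must cross `e₀, …, e_{r-1}` in this order.
-/

open Finset SimpleGraph

theorem Fin.lt_card_filter_iff_of_antitone {n : ℕ} {P : Fin n → Prop} [DecidablePred P]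
    (hP : Antitone P) (j : Fin n) : (j : ℕ) < #{i | P i} ↔ P j := by
  refine ⟨fun hj => ?_, fun hj => ?_⟩
  · by_contra hPj
    have : #{i | P i} ≤ #(Iio j) :=
      card_le_card fun i hi => mem_Iio.2 <| lt_of_not_ge fun hji => hPj (hP hji (mem_filter.1 hi).2)
    rw [Fin.card_Iio] at this
    omega
  · have : #(Iic j) ≤ #{i | P i} :=
      card_le_card fun i hi => mem_filter.2 ⟨mem_univ i, hP (mem_Iic.1 hi) hj⟩
    rw [Fin.card_Iic] at this
    omega

namespace SimpleGraph

variable {V : Type*} {G : SimpleGraph V} {s t a b u v x y : V} {f g : Sym2 V}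

theorem Reachable.reachable_deleteEdges_singleton_or (h : G.Reachable v a) (b : V) :
    (G.deleteEdges {s(a, b)}).Reachable v a ∨ (G.deleteEdges {s(a, b)}).Reachable v b := by
  obtain ⟨w⟩ := h
  induction w with
  | nil => exact .inl .rfl
  | @cons u z a hadj _ ih =>
    by_cases hf : s(u, z) = s(a, b)
    · rcases Sym2.eq_iff.1 hf with ⟨rfl, -⟩ | ⟨rfl, -⟩
      exacts [.inl .rfl, .inr .rfl]
    · have : (G.deleteEdges {s(a, b)}).Adj u z := deleteEdges_adj.2 ⟨hadj, hf⟩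
      exact ih.imp this.reachable.trans this.reachable.trans

theorem Connected.reachable_deleteEdges_singleton_or_or (hG : G.Connected) (f : Sym2 V)
    (x y z : V) :
    (G.deleteEdges {f}).Reachable x y ∨ (G.deleteEdges {f}).Reachable y z ∨
      (G.deleteEdges {f}).Reachable x z := by
  induction f using Sym2.ind with | _ a b => ?_
  have hab (v : V) := (hG.preconnected v a).reachable_deleteEdges_singleton_or b
  simp only [← ConnectedComponent.eq] at hab ⊢
  rcases hab x with hx | hx <;> rcases hab y with hy | hy <;> rcases hab z with hz | hz <;>
    simp only [hx, hy, hz, true_or, or_true]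

theorem Walk.reachable_deleteEdges_of_notMem_support {H : SimpleGraph V} (hHG : H ≤ G)
    (w : H.Walk u v) (ha : a ∉ w.support) (b : V) : (G.deleteEdges {s(a, b)}).Reachable u v := by
  refine ⟨w.transfer _ fun e he => ?_⟩
  rw [edgeSet_deleteEdges]
  refine ⟨edgeSet_mono hHG (w.edges_subset_edgeSet he), ?_⟩
  rintro rfl
  exact ha (w.fst_mem_support_of_mem_edges he)

theorem Walk.reachable_of_mem_support (w : G.Walk u v) (hx : x ∈ w.support) :
    G.Reachable u x := by
  classical
  exact (w.takeUntil x hx).reachable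

def IsSeparatingEdge (G : SimpleGraph V) (s t : V) (f : Sym2 V) : Prop :=
  f ∈ G.edgeSet ∧ ¬ (G.deleteEdges {f}).Reachable s t

def nearSide (G : SimpleGraph V) (s : V) (f : Sym2 V) : Set V :=
  {v | (G.deleteEdges {f}).Reachable s v}

theorem mem_nearSide_iff_of_reachable (h : (G.deleteEdges {f}).Reachable x y) :
    x ∈ G.nearSide s f ↔ y ∈ G.nearSide s f :=
  ⟨fun hx => hx.trans h, fun hy => hy.trans h.symm⟩

theorem mem_nearSide_iff_of_adj (h : G.Adj x y) (hf : s(x, y) ≠ f) :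
    x ∈ G.nearSide s f ↔ y ∈ G.nearSide s f :=
  mem_nearSide_iff_of_reachable (deleteEdges_adj.2 ⟨h, hf⟩).reachable

theorem Walk.IsTrail.notMem_edges_of_mem_nearSide_iff {w : G.Walk u v} (hw : w.IsTrail)
    (ha : a ∈ G.nearSide s s(a, b)) (hb : b ∉ G.nearSide s s(a, b))
    (huv : u ∈ G.nearSide s s(a, b) ↔ v ∈ G.nearSide s s(a, b)) : s(a, b) ∉ w.edges := by
  by_cases hu : u ∈ G.nearSide s s(a, b)
  · exact hw.not_mem_edges_of_not_reachable (fun h => hb (hu.trans h))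
      (fun h => hb ((huv.1 hu).trans h))
  · rw [Sym2.eq_swap] at ha hu huv ⊢
    exact hw.not_mem_edges_of_not_reachable (fun h => hu (ha.trans h.symm))
      (fun h => hu (huv.2 (ha.trans h.symm)))

theorem nearSide_subset_nearSide_of_notMem (ha : a ∉ G.nearSide s g) (b : V) :
    G.nearSide s g ⊆ G.nearSide s s(a, b) := by
  rintro v ⟨w⟩
  exact w.reachable_deleteEdges_of_notMem_support (deleteEdges_le _)
    (fun haw => ha (w.reachable_of_mem_support haw)) b

namespace IsSeparatingEdge

theorem reachable_of_notMem_nearSide (hG : G.Connected) (hf : G.IsSeparatingEdge s t f)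
    (hv : v ∉ G.nearSide s f) : (G.deleteEdges {f}).Reachable v t :=
  ((hG.reachable_deleteEdges_singleton_or_or f s v t).resolve_left hv).resolve_right hf.2

theorem mem_nearSide_iff_notMem (hG : G.Connected) (hf : G.IsSeparatingEdge s t s(a, b)) :
    a ∈ G.nearSide s s(a, b) ↔ b ∉ G.nearSide s s(a, b) := by
  refine ⟨fun ha hb => hf.2 ?_, fun hb => ?_⟩
  · rcases (hG.preconnected t a).reachable_deleteEdges_singleton_or b with ht | ht
    exacts [ha.trans ht.symm, hb.trans ht.symm]
  · exact ((hG.preconnected s a).reachable_deleteEdges_singleton_or b).resolve_right hb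

theorem exists_eq_mem_nearSide_notMem (hG : G.Connected) (hf : G.IsSeparatingEdge s t f) :
    ∃ a b, f = s(a, b) ∧ a ∈ G.nearSide s s(a, b) ∧ b ∉ G.nearSide s s(a, b) := by
  induction f using Sym2.ind with | _ a b => ?_
  by_cases ha : a ∈ G.nearSide s s(a, b)
  · exact ⟨a, b, rfl, ha, (hf.mem_nearSide_iff_notMem hG).1 ha⟩
  · refine ⟨b, a, Sym2.eq_swap, ?_, ?_⟩ <;> rw [Sym2.eq_swap (a := b)]
    exacts [not_not.1 (mt (hf.mem_nearSide_iff_notMem hG).2 ha), ha]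

theorem nearSide_subset_of_mem (hG : G.Connected) (hg : G.IsSeparatingEdge s t g)
    (hf : ¬ (G.deleteEdges {s(a, b)}).Reachable s t) (ha : a ∈ G.nearSide s g) :
    G.nearSide s s(a, b) ⊆ G.nearSide s g := by
  intro v hv
  by_contra hvg
  obtain ⟨w⟩ := (hg.reachable_of_notMem_nearSide hG hvg).symm
  have haw : a ∉ w.support := fun haw => hg.2 (ha.trans (w.reachable_of_mem_support haw).symm)
  exact hf (hv.trans (w.reachable_deleteEdges_of_notMem_support (deleteEdges_le _) haw b).symm)

theorem nearSide_total (hG : G.Connected) (hf : G.IsSeparatingEdge s t f)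
    (hg : G.IsSeparatingEdge s t g) :
    G.nearSide s f ⊆ G.nearSide s g ∨ G.nearSide s g ⊆ G.nearSide s f := by
  induction f using Sym2.ind with | _ a b => ?_
  by_cases ha : a ∈ G.nearSide s g
  · exact .inl (hg.nearSide_subset_of_mem hG hf.2 ha)
  · exact .inr (nearSide_subset_nearSide_of_notMem ha b)

theorem eq_of_nearSide_eq (hG : G.Connected) (hf : G.IsSeparatingEdge s t f)
    (h : G.nearSide s f = G.nearSide s g) : f = g := by
  obtain ⟨a, b, rfl, ha, hb⟩ := hf.exists_eq_mem_nearSide_notMem hG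
  by_contra hne
  rw [h] at ha hb
  exact hb ((mem_nearSide_iff_of_adj hf.1 hne).1 ha)

end IsSeparatingEdge

theorem exists_equiv_separatingEdge_monotone (hG : G.Connected) (s t : V) :
    ∃ (r : ℕ) (e : Fin r ≃ {f // G.IsSeparatingEdge s t f}),
      Monotone fun i => G.nearSide s (e i) := by
  classical
  obtain ⟨w⟩ := hG.preconnected s t
  have : Finite {f // G.IsSeparatingEdge s t f} :=
    (w.edges.finite_toSet.subset fun _ hf =>
      w.mem_edges_of_not_reachable_deleteEdges hf.2).to_subtype
  let _ := Fintype.ofFinite {f // G.IsSeparatingEdge s t f}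
  let R (f g : {f // G.IsSeparatingEdge s t f}) : Prop := G.nearSide s f ⊆ G.nearSide s g
  have : IsTrans _ R := ⟨fun _ _ _ => Set.Subset.trans⟩
  have : Std.Refl R := ⟨fun _ => subset_rfl⟩
  have : Std.Antisymm R :=
    ⟨fun f _ h h' => Subtype.ext (f.2.eq_of_nearSide_eq hG (h.antisymm h'))⟩
  have : Std.Total R := ⟨fun f g => f.2.nearSide_total hG g.2⟩
  exact ⟨_, (sort_nodup univ R).getEquivOfForallMemList _ fun f => (mem_sort R).2 (mem_univ f),
    fun _ _ hij => (pairwise_sort univ R).rel_get_of_le hij⟩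

section SeparationLevel

variable {r : ℕ} (e : Fin r ≃ {f // G.IsSeparatingEdge s t f})

open Classical in
noncomputable def separationLevel (v : V) : Fin (r + 1) :=
  ⟨#{i | v ∉ G.nearSide s (e i)},
    Nat.lt_succ_of_le ((card_filter_le _ _).trans_eq (card_fin r))⟩

variable {e}

theorem lt_separationLevel_iff (he : Monotone fun i => G.nearSide s (e i)) (v : V) (i : Fin r) :
    (i : ℕ) < separationLevel e v ↔ v ∉ G.nearSide s (e i) := by
  classical
  exact Fin.lt_card_filter_iff_of_antitone (fun _ _ hij hv hmem => hv (he hij hmem)) i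

theorem separationLevel_eq_of_forall_iff {v : V} {k : Fin (r + 1)}
    (h : ∀ i : Fin r, v ∉ G.nearSide s (e i) ↔ (i : ℕ) < k) : separationLevel e v = k := by
  classical
  refine Fin.ext ?_
  simp only [separationLevel, filter_congr fun i _ => h i]
  rw [Fin.card_filter_val_lt]
  omega

theorem separationLevel_congr (h : ∀ i, x ∈ G.nearSide s (e i) ↔ y ∈ G.nearSide s (e i)) :
    separationLevel e x = separationLevel e y := by
  classical
  exact Fin.ext (congrArg card (filter_congr fun i _ => not_congr (h i) : _ = filter _ univ))

theorem mem_nearSide_iff_of_separationLevel_eq (he : Monotone fun i => G.nearSide s (e i))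
    (h : separationLevel e x = separationLevel e y) (i : Fin r) :
    x ∈ G.nearSide s (e i) ↔ y ∈ G.nearSide s (e i) := by
  rw [← not_iff_not, ← lt_separationLevel_iff he, ← lt_separationLevel_iff he, h]

theorem separationLevel_start : separationLevel e s = 0 :=
  separationLevel_eq_of_forall_iff fun _ => iff_of_false (fun h => h Reachable.rfl) (by simp)

theorem separationLevel_target : separationLevel e t = Fin.last r :=
  separationLevel_eq_of_forall_iff fun i => iff_of_true (e i).2.2 (by simp)

theorem separationLevel_eq_of_reachable
    (h : (G.deleteEdges {f | G.IsSeparatingEdge s t f}).Reachable x y) :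
    separationLevel e x = separationLevel e y :=
  separationLevel_congr fun i =>
    mem_nearSide_iff_of_reachable (h.mono (deleteEdges_anti (Set.singleton_subset_iff.2 (e i).2)))

theorem separationLevel_eq_castSucc_and_succ (he : Monotone fun i => G.nearSide s (e i)) {i : Fin r}
    (hab : (e i : Sym2 V) = s(a, b)) (ha : a ∈ G.nearSide s s(a, b))
    (hb : b ∉ G.nearSide s s(a, b)) :
    separationLevel e a = i.castSucc ∧ separationLevel e b = i.succ := by
  rw [← hab] at ha hb
  have hside (j : Fin r) (hj : j ≠ i) : a ∈ G.nearSide s (e j) ↔ b ∈ G.nearSide s (e j) :=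
    mem_nearSide_iff_of_adj (show s(a, b) ∈ G.edgeSet from hab ▸ (e i).2.1)
      fun h => hj (e.injective (Subtype.ext (h.symm.trans hab.symm)))
  constructor <;> refine separationLevel_eq_of_forall_iff fun j => ?_
  · rcases lt_or_ge j i with hji | hij
    · exact iff_of_true ((hside j hji.ne).not.2 fun hbj => hb (he hji.le hbj)) (by simpa using hji)
    · exact iff_of_false (not_not.2 (he hij ha)) (by simpa using hij)
  · rcases le_or_gt j i with hji | hij
    · exact iff_of_true (fun hbj => hb (he hji hbj)) (by simp; omega)
    · exact iff_of_false (not_not.2 ((hside j hij.ne').1 (he hij.le ha))) (by simp; omega)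

theorem reachable_of_separationLevel_eq (hG : G.Connected)
    (he : Monotone fun i => G.nearSide s (e i)) (h : separationLevel e x = separationLevel e y) :
    (G.deleteEdges {f | G.IsSeparatingEdge s t f}).Reachable x y := by
  obtain ⟨p, hp⟩ := hG.exists_isPath x y
  refine ⟨p.toDeleteEdges _ fun f hfp hf => ?_⟩
  obtain ⟨a, b, rfl, ha, hb⟩ := hf.exists_eq_mem_nearSide_notMem hG
  obtain ⟨i, hi⟩ := e.surjective ⟨_, hf⟩
  have hside := mem_nearSide_iff_of_separationLevel_eq he h i
  rw [hi] at hside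
  exact hp.isTrail.notMem_edges_of_mem_nearSide_iff ha hb hside hfp

variable (e) in
noncomputable def componentSeparationLevel :
    (G.deleteEdges {f | G.IsSeparatingEdge s t f}).ConnectedComponent → Fin (r + 1) :=
  ConnectedComponent.lift (separationLevel e) fun _ _ p _ =>
    separationLevel_eq_of_reachable p.reachable

theorem componentSeparationLevel_mk (v : V) :
    componentSeparationLevel e
        ((G.deleteEdges {f | G.IsSeparatingEdge s t f}).connectedComponentMk v) =
      separationLevel e v :=
  rfl

theorem componentSeparationLevel_bijective (hG : G.Connected)
    (he : Monotone fun i => G.nearSide s (e i)) :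
    Function.Bijective (componentSeparationLevel e) := by
  refine ⟨fun c c' => ?_, fun k => ?_⟩
  · induction c, c' using ConnectedComponent.ind₂ with | h x y => ?_
    exact fun h => ConnectedComponent.sound (reachable_of_separationLevel_eq hG he h)
  · induction k using Fin.lastCases with
    | last => exact ⟨_, (componentSeparationLevel_mk t).trans separationLevel_target⟩
    | cast i =>
      obtain ⟨a, b, hab, ha, hb⟩ := (e i).2.exists_eq_mem_nearSide_notMem hG
      exact ⟨_, (componentSeparationLevel_mk a).trans
        (separationLevel_eq_castSucc_and_succ he hab ha hb).1⟩

theorem drop_separationLevel_sublist_edges (hG : G.Connected)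
    (he : Monotone fun i => G.nearSide s (e i)) (p : G.Walk x t) :
    ((List.ofFn fun i => (e i : Sym2 V)).drop (separationLevel e x)).Sublist p.edges := by
  induction p with
  | nil => simp [separationLevel_target]
  | @cons x z t hxz p ih =>
    specialize ih he
    rw [Walk.edges_cons]
    by_cases hf : G.IsSeparatingEdge s t s(x, z)
    · obtain ⟨i, hi⟩ := e.surjective ⟨_, hf⟩
      have hi' : (e i : Sym2 V) = s(x, z) := congrArg Subtype.val hi
      by_cases hx : x ∈ G.nearSide s s(x, z)
      · obtain ⟨hlx, hlz⟩ :=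
          separationLevel_eq_castSucc_and_succ he hi' hx ((hf.mem_nearSide_iff_notMem hG).1 hx)
        have hget : (List.ofFn fun i => (e i : Sym2 V))[(i : ℕ)]'(by simp) = s(x, z) := by
          simp [hi']
        rw [hlz, Fin.val_succ] at ih
        rw [hlx, Fin.val_castSucc, List.drop_eq_getElem_cons (by simp), hget]
        exact ih.cons_cons _
      · have hz : z ∈ G.nearSide s s(z, x) := by
          rw [Sym2.eq_swap]; exact not_not.1 (mt (hf.mem_nearSide_iff_notMem hG).2 hx)
        rw [Sym2.eq_swap] at hx
        obtain ⟨hlz, hlx⟩ :=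
          separationLevel_eq_castSucc_and_succ he (hi'.trans Sym2.eq_swap) hz hx
        rw [hlz] at ih
        rw [hlx, Fin.val_succ]
        exact ((List.drop_sublist_drop_left _ (Nat.le_succ _)).trans ih).cons _
    · rw [separationLevel_congr fun i => mem_nearSide_iff_of_adj hxz fun h => hf (h ▸ (e i).2)]
      exact ih.cons _

end SeparationLevel

end SimpleGraph

theorem stmt_5_general {V : Type*} (G : SimpleGraph V) (hG : G.Connected)
    (s t : V) :
    ∃ (r : ℕ) (e : Fin r → Sym2 V)
      (C : Fin (r + 1) →
        (G.deleteEdges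
          {f : Sym2 V | f ∈ G.edgeSet ∧
            ¬ (G.deleteEdges {f}).Reachable s t}).ConnectedComponent),
      Function.Injective e ∧
      (∀ i, (e i) ∈ G.edgeSet ∧ ¬ (G.deleteEdges {e i}).Reachable s t) ∧
      (∀ f : Sym2 V, f ∈ G.edgeSet → ¬ (G.deleteEdges {f}).Reachable s t →
        ∃ i, e i = f) ∧
      Function.Bijective C ∧
      (G.deleteEdges {f : Sym2 V | f ∈ G.edgeSet ∧
          ¬ (G.deleteEdges {f}).Reachable s t}).connectedComponentMk s = C 0 ∧
      (G.deleteEdges {f : Sym2 V | f ∈ G.edgeSet ∧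
          ¬ (G.deleteEdges {f}).Reachable s t}).connectedComponentMk t = C (Fin.last r) ∧
      (∀ i : Fin r, ∃ u v : V, e i = Sym2.mk u v ∧
        (G.deleteEdges {f : Sym2 V | f ∈ G.edgeSet ∧
            ¬ (G.deleteEdges {f}).Reachable s t}).connectedComponentMk u = C i.castSucc ∧
        (G.deleteEdges {f : Sym2 V | f ∈ G.edgeSet ∧
            ¬ (G.deleteEdges {f}).Reachable s t}).connectedComponentMk v = C i.succ) ∧
      (∀ p : G.Walk s t, (List.ofFn e).Sublist p.edges) := by
  obtain ⟨r, e, he⟩ := G.exists_equiv_separatingEdge_monotone hG s t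
  let C := (Equiv.ofBijective _ (componentSeparationLevel_bijective hG he)).symm
  have hC (v : V) (k : Fin (r + 1)) (h : separationLevel e v = k) :
      (G.deleteEdges {f | G.IsSeparatingEdge s t f}).connectedComponentMk v = C k :=
    (Equiv.eq_symm_apply _).2 h
  refine ⟨r, fun i => e i, C, Subtype.val_injective.comp e.injective, fun i => (e i).2,
    fun f hf hf' => ?_, C.bijective, hC s 0 separationLevel_start,
    hC t _ separationLevel_target,
    fun i => ?_, fun p => ?_⟩
  · obtain ⟨i, hi⟩ := e.surjective ⟨f, hf, hf'⟩
    exact ⟨i, congrArg Subtype.val hi⟩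
  · obtain ⟨a, b, hab, ha, hb⟩ := (e i).2.exists_eq_mem_nearSide_notMem hG
    obtain ⟨hla, hlb⟩ := separationLevel_eq_castSucc_and_succ he hab ha hb
    exact ⟨a, b, hab, hC a _ hla, hC b _ hlb⟩
  · simpa [separationLevel_start] using drop_separationLevel_sublist_edges hG he p

/-- Decomposition D1: in a connected graph `G`, the bridge links `e_1, …, e_r`
separating `s` from `t` decompose `G` (after their removal) into exactly `r + 1`
connected components `C_1, …, C_{r+1}`, ordered so that `s ∈ C_1`, `t ∈ C_{r+1}`,
and each `e_l` joins a node of `C_l` to a node of `C_{l+1}`; moreover every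
`s`-`t` path traverses `e_1, …, e_r` in this order. -/
theorem stmt_5 {V : Type*} [Fintype V] (G : SimpleGraph V) (hG : G.Connected)
    (s t : V) :
    ∃ (r : ℕ) (e : Fin r → Sym2 V)
      (C : Fin (r + 1) →
        (G.deleteEdges
          {f : Sym2 V | f ∈ G.edgeSet ∧
            ¬ (G.deleteEdges {f}).Reachable s t}).ConnectedComponent),
      Function.Injective e ∧
      (∀ i, (e i) ∈ G.edgeSet ∧ ¬ (G.deleteEdges {e i}).Reachable s t) ∧
      (∀ f : Sym2 V, f ∈ G.edgeSet → ¬ (G.deleteEdges {f}).Reachable s t →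
        ∃ i, e i = f) ∧
      Function.Bijective C ∧
      (G.deleteEdges {f : Sym2 V | f ∈ G.edgeSet ∧
          ¬ (G.deleteEdges {f}).Reachable s t}).connectedComponentMk s = C 0 ∧
      (G.deleteEdges {f : Sym2 V | f ∈ G.edgeSet ∧
          ¬ (G.deleteEdges {f}).Reachable s t}).connectedComponentMk t = C (Fin.last r) ∧
      (∀ i : Fin r, ∃ u v : V, e i = Sym2.mk u v ∧
        (G.deleteEdges {f : Sym2 V | f ∈ G.edgeSet ∧
            ¬ (G.deleteEdges {f}).Reachable s t}).connectedComponentMk u = C i.castSucc ∧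
        (G.deleteEdges {f : Sym2 V | f ∈ G.edgeSet ∧
            ¬ (G.deleteEdges {f}).Reachable s t}).connectedComponentMk v = C i.succ) ∧
      (∀ p : G.Walk s t, (List.ofFn e).Sublist p.edges) :=
  stmt_5_general G hG s t
end

section
/- In an OKCP instance with K−1 previously established connections, after assigning to E_2 all free links lying outside the connected component of s in (V, E_1), the number of connected components of the graph (V, E_2 together with these reassigned links) that are accessible to the backup path is at most K−1, since each such component must contain at least one of the K−1 previous backup paths and each backup path is connected, hence lies in a single component. -/
/-! Each accessible component `C` contains a vertex `z` reachable from `s` in `(V, E₁)` and,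
being nontrivial, an edge at `z`. That edge is not a reassigned free link, since those avoid the
component of `s`, so it is a link of some backup path `b i`; the whole (connected) path `b i`
then lies in `C`. So every accessible component is the component of some `u i`. -/

namespace SimpleGraph

variable {V : Type*}

lemma exists_adj_of_reachable_of_adj {H : SimpleGraph V} {x y z : V} (hxy : H.Adj x y)
    (hzx : H.Reachable z x) : ∃ w, H.Adj z w := by
  by_cases hz : z = x
  · exact ⟨y, hz ▸ hxy⟩
  · exact mem_support_of_reachable hz hzx

lemma Walk.connectedComponentMk_eq_of_mem_support {G H : SimpleGraph V} {u v z : V}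
    (p : G.Walk u v) (hp : ∀ e ∈ p.edges, e ∈ H.edgeSet) (hz : z ∈ p.support) :
    H.connectedComponentMk z = H.connectedComponentMk u := by
  rw [← support_transfer p hp] at hz
  classical
  exact (ConnectedComponent.sound ⟨(p.transfer H hp).takeUntil z hz⟩).symm

lemma Walk.edges_subset_edgeSet_fromEdgeSet {G : SimpleGraph V} {u v : V} {E : Set (Sym2 V)}
    (p : G.Walk u v) (hp : ∀ e ∈ p.edges, e ∈ E) : ∀ e ∈ p.edges, e ∈ (fromEdgeSet E).edgeSet :=
  fun e he => edgeSet_fromEdgeSet E ▸ ⟨hp e he, G.not_isDiag_of_mem_edgeSet (p.edges_subset_edgeSet he)⟩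

end SimpleGraph

lemma Set.ncard_le_of_subset_range {α ι : Type*} [Finite ι] {S : Set α} {f : ι → α}
    (hS : S ⊆ Set.range f) : S.ncard ≤ Nat.card ι :=
  calc S.ncard ≤ (Set.range f).ncard := Set.ncard_le_ncard hS
    _ ≤ Nat.card ι := by
      rw [← Set.image_univ, ← Set.ncard_univ]
      exact Set.ncard_image_le

open SimpleGraph in
theorem stmt_10_general {V : Type*} (G : SimpleGraph V)
    (E₁ : Set (Sym2 V))
    (k : ℕ) (u v : Fin k → V) (b : ∀ i, G.Walk (u i) (v i))
    (E₂ : Set (Sym2 V)) (hE₂ : E₂ = ⋃ i, {e : Sym2 V | e ∈ (b i).edges})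
    (s : V)
    (F : Set (Sym2 V))
    (hF : F = {e ∈ E₁ | ∀ x ∈ e, ¬ (SimpleGraph.fromEdgeSet E₁).Reachable s x}) :
    Set.ncard {C : (SimpleGraph.fromEdgeSet (E₂ ∪ F)).ConnectedComponent |
        (∃ x y : V, (SimpleGraph.fromEdgeSet (E₂ ∪ F)).Adj x y ∧
          (SimpleGraph.fromEdgeSet (E₂ ∪ F)).connectedComponentMk x = C) ∧
        (∃ x : V, (SimpleGraph.fromEdgeSet (E₂ ∪ F)).connectedComponentMk x = C ∧
          (SimpleGraph.fromEdgeSet E₁).Reachable s x)} ≤ k := by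
  set H := fromEdgeSet (E₂ ∪ F)
  have hb : ∀ i, ∀ e ∈ (b i).edges, e ∈ E₂ ∪ F := fun i e he =>
    Or.inl (hE₂ ▸ Set.mem_iUnion.2 ⟨i, he⟩)
  refine le_of_le_of_eq (Set.ncard_le_of_subset_range (f := fun i => H.connectedComponentMk (u i))
    ?_) (Nat.card_fin k)
  rintro C ⟨⟨x, y, hxy, rfl⟩, z, hzx, hsz⟩
  obtain ⟨w, hzw⟩ := exists_adj_of_reachable_of_adj hxy (ConnectedComponent.exact hzx)
  rcases ((fromEdgeSet_adj _).1 hzw).1 with hzw₂ | hzwF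
  · obtain ⟨i, hi⟩ := Set.mem_iUnion.1 (hE₂ ▸ hzw₂)
    refine ⟨i, ?_⟩
    rw [← hzx, (b i).connectedComponentMk_eq_of_mem_support
      ((b i).edges_subset_edgeSet_fromEdgeSet (hb i)) ((b i).fst_mem_support_of_mem_edges hi)]
  · exact absurd hsz ((hF ▸ hzwF).2 z (Sym2.mem_mk_left z w))

/-- In an OKCP instance with `K - 1 = k` previously established connections,
let `E₂` be the union of the edge sets of the `k` (connected) backup paths, and
reassign to the backup side the free links `F ⊆ E₁` lying outside the connected
component of `s` in `(V, E₁)`. Then the number of connected components of the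
graph `(V, E₂ ∪ F)` that are accessible to the backup path — i.e. nontrivial
components having a node in common with the component of `s` in `(V, E₁)` — is
at most `k`, since each such component contains at least one of the `k` backup
paths and each backup path, being connected, lies in a single component. -/
theorem stmt_10 {V : Type*} [Fintype V] (G : SimpleGraph V)
    (E₁ : Set (Sym2 V)) (hE₁ : E₁ ⊆ G.edgeSet)
    (k : ℕ) (u v : Fin k → V) (b : ∀ i, G.Walk (u i) (v i))
    (E₂ : Set (Sym2 V)) (hE₂ : E₂ = ⋃ i, {e : Sym2 V | e ∈ (b i).edges})
    (h12 : Disjoint E₁ E₂)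
    (s : V)
    (F : Set (Sym2 V))
    (hF : F = {e ∈ E₁ | ∀ x ∈ e, ¬ (SimpleGraph.fromEdgeSet E₁).Reachable s x}) :
    Set.ncard {C : (SimpleGraph.fromEdgeSet (E₂ ∪ F)).ConnectedComponent |
        (∃ x y : V, (SimpleGraph.fromEdgeSet (E₂ ∪ F)).Adj x y ∧
          (SimpleGraph.fromEdgeSet (E₂ ∪ F)).connectedComponentMk x = C) ∧
        (∃ x : V, (SimpleGraph.fromEdgeSet (E₂ ∪ F)).connectedComponentMk x = C ∧
          (SimpleGraph.fromEdgeSet E₁).Reachable s x)} ≤ k :=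
  stmt_10_general G E₁ k u v b E₂ hE₂ s F hF
end

section
/- In the 'unavoidable first backup' case—where both p_2 and b_2 may share edges with b_1 but neither shares an edge with p_1—the failure probability of the second connection equals P_f(p_2 ∩ b_2) + P_f(p_1 − b_1), where p_1 − b_1 denotes the set of edges of p_1 not on b_1. -/
open Finset

theorem Finset.sum_ite_eq_sum_add_sum_of_disjoint {α M : Type*} [Fintype α] [AddCommMonoid M]
    {A B : Finset α} (hAB : Disjoint A B) {p : α → Prop} [DecidablePred p]
    (hp : ∀ a, p a ↔ a ∈ A ∨ a ∈ B) (f : α → M) :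
    (∑ a, if p a then f a else 0) = ∑ a ∈ A, f a + ∑ a ∈ B, f a := by
  rw [← sum_disjUnion hAB, ← sum_filter]
  congr 1
  ext a
  simp [hp]

open scoped Classical

theorem stmt_12_general {V : Type*} [Fintype V] (G : SimpleGraph V)
    (P : Sym2 V → ℝ)
    {s₁ t₁ s₂ t₂ : V} (p₁ b₁ : G.Walk s₁ t₁) (p₂ b₂ : G.Walk s₂ t₂)
    (h1 : List.Disjoint p₂.edges p₁.edges)
    (fails : Sym2 V → Prop)
    (hfails : ∀ e, fails e ↔
      (e ∈ p₂.edges ∧ e ∈ b₂.edges) ∨ (e ∈ p₁.edges ∧ e ∉ b₁.edges)) :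
    (∑ e : Sym2 V, if fails e then P e else 0)
      = (∑ e ∈ p₂.edges.toFinset ∩ b₂.edges.toFinset, P e)
        + ∑ e ∈ p₁.edges.toFinset \ b₁.edges.toFinset, P e := by
  have hdisj : Disjoint (p₂.edges.toFinset ∩ b₂.edges.toFinset)
      (p₁.edges.toFinset \ b₁.edges.toFinset) :=
    disjoint_left.2 fun e h₂ h₁ =>
      h1 (List.mem_toFinset.1 (mem_inter.1 h₂).1) (List.mem_toFinset.1 (mem_sdiff.1 h₁).1)
  exact sum_ite_eq_sum_add_sum_of_disjoint hdisj (fun e => by simp [hfails]) P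

/-- Unavoidable first backup case: both `p₂` and `b₂` share edges with `b₁` but
neither shares an edge with `p₁`. With the failed connection-2 events being a
failed link in `p₂ ∩ b₂` or a failed link in `p₁ − b₁` (which triggers preemption
through the links shared with `b₁`), the failure probability of the second
connection equals `P_f(p₂ ∩ b₂) + P_f(p₁ − b₁)`. -/
theorem stmt_12 {V : Type*} [Fintype V] (G : SimpleGraph V)
    (P : Sym2 V → ℝ) (hP0 : ∀ e, 0 ≤ P e)
    (hP1 : (∑ e : Sym2 V, if e ∈ G.edgeSet then P e else 0) = 1)
    {s₁ t₁ s₂ t₂ : V} (p₁ b₁ : G.Walk s₁ t₁) (p₂ b₂ : G.Walk s₂ t₂)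
    (h1 : List.Disjoint p₂.edges p₁.edges) (h2 : List.Disjoint b₂.edges p₁.edges)
    (h3 : ∃ f ∈ b₁.edges, f ∈ p₂.edges) (h4 : ∃ f ∈ b₁.edges, f ∈ b₂.edges)
    (fails : Sym2 V → Prop)
    (hfails : ∀ e, fails e ↔
      (e ∈ p₂.edges ∧ e ∈ b₂.edges) ∨ (e ∈ p₁.edges ∧ e ∉ b₁.edges)) :
    (∑ e : Sym2 V, if fails e then P e else 0)
      = (∑ e ∈ p₂.edges.toFinset ∩ b₂.edges.toFinset, P e)
        + ∑ e ∈ p₁.edges.toFinset \ b₁.edges.toFinset, P e :=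
  stmt_12_general G P p₁ b₁ p₂ b₂ h1 fails hfails
end

section
/- In the shared backup case, if a feasible solution for the second connection exists (p_2 and b_2 edge-disjoint from p_1 and b_1), then its minimum achievable failure probability is at most the minimum achievable in the unavoidable first backup case: P_f(p_2 ∩ b_2) over bridges of G_2 is bounded above by P_f(p'_2 ∩ b'_2) + P_f(p_1 − b_1) for any feasible paths in the other case, since every bridge of G_2 = G − p_1 − b_1 separating s_2 from t_2 is also a bridge of G_1 = G − p_1. -/
/-!
Every walk from `s` to `t` uses each bridge separating `s` from `t`, so the bridge-sum of `G₁` is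
at most `P_f(p' ∩ b')` for any two walks `p'`, `b'` in `G₁`; the extra term `P_f(p₁ − b₁)` is
nonnegative. A separating bridge of `G₁` stays one in the subgraph `G₂`: since `G₂` still connects
`s₂` and `t₂`, the edge cannot be missing from `G₂`.
-/

open scoped Classical

namespace SimpleGraph

variable {V : Type*}

def IsSeparatingBridge (G : SimpleGraph V) (s t : V) (e : Sym2 V) : Prop :=
  e ∈ G.edgeSet ∧ ¬ (G.deleteEdges {e}).Reachable s t

theorem IsSeparatingBridge.of_le {G H : SimpleGraph V} {s t : V} {e : Sym2 V}
    (h : G.IsSeparatingBridge s t e) (hle : H ≤ G) (hr : H.Reachable s t) :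
    H.IsSeparatingBridge s t e := by
  have he : e ∈ H.edgeSet := by
    by_contra he
    refine h.2 (hr.mono fun a b hab => ?_)
    exact (deleteEdges_adj ..).2 ⟨hle hab, fun hmem => he (Set.mem_singleton_iff.1 hmem ▸ hab)⟩
  exact ⟨he, fun hr' => h.2 (hr'.mono (deleteEdges_mono hle))⟩

theorem sum_le_sum_inter_edges_of_not_reachable {G : SimpleGraph V} {s t : V}
    {P : Sym2 V → ℝ} (hP : ∀ e, 0 ≤ P e) {S : Finset (Sym2 V)}
    (hS : ∀ e ∈ S, ¬ (G.deleteEdges {e}).Reachable s t) (p b : G.Walk s t) :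
    ∑ e ∈ S, P e ≤ ∑ e ∈ p.edges.toFinset ∩ b.edges.toFinset, P e := by
  refine Finset.sum_le_sum_of_subset_of_nonneg (fun e he => ?_) (fun e _ _ => hP e)
  simp only [Finset.mem_inter, List.mem_toFinset]
  exact ⟨p.mem_edges_of_not_reachable_deleteEdges (hS e he),
    b.mem_edges_of_not_reachable_deleteEdges (hS e he)⟩

end SimpleGraph

open SimpleGraph

theorem stmt_14_general {V : Type*} [Fintype V] (G : SimpleGraph V)
    (P : Sym2 V → ℝ) (hP0 : ∀ e, 0 ≤ P e)
    {s₁ t₁ s₂ t₂ : V} (p₁ b₁ : G.Walk s₁ t₁)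
    (G₁ G₂ : SimpleGraph V)
    (hG₂ : G₂ = G₁.deleteEdges {e : Sym2 V | e ∈ b₁.edges})
    (hreach : G₂.Reachable s₂ t₂) :
    ({e : Sym2 V | e ∈ G₁.edgeSet ∧ ¬ (G₁.deleteEdges {e}).Reachable s₂ t₂}
        ⊆ {e : Sym2 V | e ∈ G₂.edgeSet ∧ ¬ (G₂.deleteEdges {e}).Reachable s₂ t₂})
    ∧ ∀ p' b' : G₁.Walk s₂ t₂,
        (∑ e ∈ Finset.univ.filter
            (fun e => e ∈ G₁.edgeSet ∧ ¬ (G₁.deleteEdges {e}).Reachable s₂ t₂), P e)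
          ≤ (∑ e ∈ p'.edges.toFinset ∩ b'.edges.toFinset, P e)
            + ∑ e ∈ p₁.edges.toFinset \ b₁.edges.toFinset, P e := by
  have hle : G₂ ≤ G₁ := hG₂ ▸ deleteEdges_le _
  refine ⟨fun e he => IsSeparatingBridge.of_le he hle hreach, fun p' b' => ?_⟩
  have hextra : 0 ≤ ∑ e ∈ p₁.edges.toFinset \ b₁.edges.toFinset, P e :=
    Finset.sum_nonneg fun e _ => hP0 e
  exact le_add_of_le_of_nonneg
    (sum_le_sum_inter_edges_of_not_reachable hP0 (fun e he => (Finset.mem_filter.1 he).2.2) p' b') hextra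

/-- Comparison of the shared backup and unavoidable first backup cases.
Let `G₁ = G − p₁` and `G₂ = G₁ − b₁` (with `p₁`, `b₁` edge-disjoint), and assume
`s₂`, `t₂` are still connected in `G₂` (the shared backup case is feasible).
Then every bridge separating `s₂` from `t₂` in `G₁` is also a bridge separating
`s₂` from `t₂` in `G₂`, and any feasible pair `p'`, `b'` of the unavoidable first
backup case (paths in `G₁`) has failure probability
`P_f(p' ∩ b') + P_f(p₁ − b₁)` at least the bridge-sum of `G₁`, which is the
minimum achievable failure probability of the shared backup case. -/
theorem stmt_14 {V : Type*} [Fintype V] (G : SimpleGraph V)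
    (P : Sym2 V → ℝ) (hP0 : ∀ e, 0 ≤ P e)
    {s₁ t₁ s₂ t₂ : V} (p₁ b₁ : G.Walk s₁ t₁)
    (hd : List.Disjoint p₁.edges b₁.edges)
    (G₁ G₂ : SimpleGraph V)
    (hG₁ : G₁ = G.deleteEdges {e : Sym2 V | e ∈ p₁.edges})
    (hG₂ : G₂ = G₁.deleteEdges {e : Sym2 V | e ∈ b₁.edges})
    (hreach : G₂.Reachable s₂ t₂) :
    ({e : Sym2 V | e ∈ G₁.edgeSet ∧ ¬ (G₁.deleteEdges {e}).Reachable s₂ t₂}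
        ⊆ {e : Sym2 V | e ∈ G₂.edgeSet ∧ ¬ (G₂.deleteEdges {e}).Reachable s₂ t₂})
    ∧ ∀ p' b' : G₁.Walk s₂ t₂,
        (∑ e ∈ Finset.univ.filter
            (fun e => e ∈ G₁.edgeSet ∧ ¬ (G₁.deleteEdges {e}).Reachable s₂ t₂), P e)
          ≤ (∑ e ∈ p'.edges.toFinset ∩ b'.edges.toFinset, P e)
            + ∑ e ∈ p₁.edges.toFinset \ b₁.edges.toFinset, P e :=
  stmt_14_general G P hP0 p₁ b₁ G₁ G₂ hG₂ hreach
end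

section
/- Let G be an undirected graph with nonnegative edge weights, s,t ∈ V connected, and let B be the set of bridges separating s from t. Then the minimum over all pairs of s-t paths (p,b) of Σ_{e ∈ p ∩ b} w(e) equals Σ_{e ∈ B} w(e), and this minimum is attained by a pair of paths whose common edges are exactly B. -/
/-!
Every `s`-`t` walk crosses every edge separating `s` from `t`, so the common edges of two
`s`-`t` paths always contain these bridges; it remains to find two walks whose common edges are
only bridges, and to shortcut them to paths.

If no edge separates `s` from `t`, this is Menger's theorem for two edge-disjoint walks. It is
proved by induction on the graph in the more flexible fan form: if no edge separates `s` from both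
`x` and `y`, there are edge-disjoint walks from `s` to `x` and to `y`. Delete the last edge `ux` of
a path to `x`. If that cuts `x` off from `s`, a fan to `{u, y}` extends by `ux`. Otherwise, unless
the induction hypothesis applies directly, some edge `cd` (with `c` on the side of `s`) separates
`s` from both `x` and `y` in `G - ux`, and a fan to `{u, c}` extends by `ux` and by `cd` followed by
a walk from `d` to `y`.

Otherwise split at a bridge `ab`, with `a` on the side of `s`: in `G - ab`, two walks `s`-`a` and
two walks `b`-`t` whose common edges separate their ends concatenate through `ab`.
-/

open scoped Classical

namespace SimpleGraph

variable {V : Type*} {G : SimpleGraph V}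

lemma deleteEdges_singleton_lt {e : Sym2 V} (he : e ∈ G.edgeSet) : G.deleteEdges {e} < G :=
  (deleteEdges_le _).lt_of_ne (by simpa using he)

lemma deleteEdges_singleton_comm (e f : Sym2 V) :
    (G.deleteEdges {e}).deleteEdges {f} = (G.deleteEdges {f}).deleteEdges {e} := by
  simp only [deleteEdges_deleteEdges, Set.union_comm]

lemma Reachable.deleteEdge_cases {a b x z : V} (h : G.Reachable x z) :
    (G.deleteEdges {s(a, b)}).Reachable x z ∨
      (G.deleteEdges {s(a, b)}).Reachable x a ∧ (G.deleteEdges {s(a, b)}).Reachable b z ∨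
      (G.deleteEdges {s(a, b)}).Reachable x b ∧ (G.deleteEdges {s(a, b)}).Reachable a z := by
  obtain ⟨p⟩ := h
  induction p with
  | nil => exact .inl .rfl
  | @cons x x' z hadj p ih =>
    by_cases he : s(x, x') = s(a, b)
    · rcases Sym2.eq_iff.mp he with ⟨rfl, rfl⟩ | ⟨rfl, rfl⟩ <;>
        rcases ih with h | ⟨h₁, h₂⟩ | ⟨h₁, h₂⟩ <;>
        grind [Reachable.trans, Reachable.symm, Reachable.rfl]
    · have hxx' : (G.deleteEdges {s(a, b)}).Reachable x x' :=
        (deleteEdges_adj.mpr ⟨hadj, he⟩).reachable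
      rcases ih with h | ⟨h₁, h₂⟩ | ⟨h₁, h₂⟩
      · exact .inl (hxx'.trans h)
      · exact .inr (.inl ⟨hxx'.trans h₁, h₂⟩)
      · exact .inr (.inr ⟨hxx'.trans h₁, h₂⟩)

lemma Reachable.deleteEdge_of_reachable_ends {a b x z : V} (h : G.Reachable x z)
    (ha : (G.deleteEdges {s(a, b)}).Reachable x a)
    (hb : (G.deleteEdges {s(a, b)}).Reachable x b) :
    (G.deleteEdges {s(a, b)}).Reachable x z := by
  rcases h.deleteEdge_cases (a := a) (b := b) with h | ⟨-, h⟩ | ⟨-, h⟩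
  exacts [h, hb.trans h, ha.trans h]

lemma Reachable.exists_crossing_of_not_reachable_deleteEdges {e : Sym2 V} {x z : V}
    (h : G.Reachable x z) (he : ¬ (G.deleteEdges {e}).Reachable x z) :
    ∃ a b, e = s(a, b) ∧ G.Adj a b ∧
      (G.deleteEdges {e}).Reachable x a ∧ (G.deleteEdges {e}).Reachable b z := by
  induction e using Sym2.ind with | _ a b => ?_
  have hab : G.Adj a b :=
    h.some.edges_subset_edgeSet (h.some.mem_edges_of_not_reachable_deleteEdges he)
  rcases h.deleteEdge_cases (a := a) (b := b) with h | h | h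
  · exact absurd h he
  · exact ⟨a, b, rfl, hab, h⟩
  · exact ⟨b, a, Sym2.eq_swap, hab.symm, by simpa only [Sym2.eq_swap] using h⟩

lemma Reachable.exists_adj_reachable_deleteEdge {s x : V} (h : G.Reachable s x) (hne : s ≠ x) :
    ∃ u, G.Adj u x ∧ (G.deleteEdges {s(u, x)}).Reachable s u := by
  obtain ⟨p, hp⟩ := h.symm.exists_isPath
  cases p with
  | nil => exact absurd rfl hne
  | cons hadj q =>
    refine ⟨_, hadj.symm, (q.toDeleteEdge _ fun hq => ?_).reachable.symm⟩
    exact (Walk.cons_isPath_iff _ _).mp hp |>.2 (q.snd_mem_support_of_mem_edges hq)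

lemma Walk.disjoint_edges_of_not_reachable {x a y b : V} (p : G.Walk x a) (q : G.Walk y b)
    (h : ¬ G.Reachable x y) : p.edges.Disjoint q.edges := by
  intro f hp hq
  induction f using Sym2.ind with | _ c d => ?_
  exact h ((p.takeUntil c (p.fst_mem_support_of_mem_edges hp)).reachable.trans
    (q.takeUntil c (q.fst_mem_support_of_mem_edges hq)).reachable.symm)

def NoEdgeSeparates (G : SimpleGraph V) (s : V) (T : Set V) : Prop :=
  ∀ g, ∃ v ∈ T, (G.deleteEdges {g}).Reachable s v

lemma NoEdgeSeparates.deleteEdge {s a b : V} {T : Set V} (hG : G.NoEdgeSeparates s T) :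
    (G.deleteEdges {s(a, b)}).NoEdgeSeparates s (insert a (insert b T)) := by
  intro g
  obtain ⟨v, hv, hr⟩ := hG g
  rw [deleteEdges_singleton_comm]
  rcases hr.deleteEdge_cases (a := a) (b := b) with h | ⟨h, -⟩ | ⟨h, -⟩
  exacts [⟨v, by simp [hv], h⟩, ⟨a, by simp, h⟩, ⟨b, by simp, h⟩]

lemma NoEdgeSeparates.mono {s : V} {T T' : Set V} (hG : G.NoEdgeSeparates s T)
    (hT : ∀ v ∈ T, G.Reachable s v → v ∈ T') : G.NoEdgeSeparates s T' := fun g => by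
  obtain ⟨v, hv, hr⟩ := hG g
  exact ⟨v, hT v hv (hr.mono (deleteEdges_le _)), hr⟩

lemma exists_walks_disjoint_edges_of_cut {H : SimpleGraph V} (hle : H ≤ G) {s u x c d y : V}
    (hux : G.Adj u x) (hcd : G.Adj c d) (hne : s(c, d) ≠ s(u, x))
    (hux' : s(u, x) ∉ H.edgeSet) (hcd' : s(c, d) ∉ H.edgeSet)
    (p : H.Walk s u) (q : H.Walk s c) (hpq : p.edges.Disjoint q.edges)
    (r : H.Walk d y) (hd : ¬ H.Reachable s d) :
    ∃ (p' : G.Walk s x) (q' : G.Walk s y), p'.edges.Disjoint q'.edges := by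
  refine ⟨(p.mapLe hle).concat hux, (q.mapLe hle).append (.cons hcd (r.mapLe hle)), ?_⟩
  simp only [Walk.edges_concat, Walk.edges_append, Walk.edges_cons, Walk.edges_mapLe_eq_edges,
    List.concat_eq_append, List.disjoint_append_left, List.disjoint_append_right,
    List.disjoint_cons_right, List.singleton_disjoint, List.mem_append, List.mem_singleton]
  exact ⟨⟨hpq, fun h => hux' (q.edges_subset_edgeSet h)⟩,
    not_or.mpr ⟨fun h => hcd' (p.edges_subset_edgeSet h), hne⟩,
    p.disjoint_edges_of_not_reachable r hd, fun h => hux' (r.edges_subset_edgeSet h)⟩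

theorem exists_walks_disjoint_edges [Finite V] {s x y : V} (hx : G.Reachable s x)
    (hy : G.Reachable s y) (hG : G.NoEdgeSeparates s {x, y}) :
    ∃ (p : G.Walk s x) (q : G.Walk s y), p.edges.Disjoint q.edges := by
  induction G using WellFoundedLT.induction generalizing x y with | ind G ih => ?_
  obtain rfl | hsx := eq_or_ne s x
  · exact ⟨.nil, hy.some, by simp⟩
  obtain ⟨u, hux, hu⟩ := hx.exists_adj_reachable_deleteEdge hsx
  set G₁ := G.deleteEdges {s(u, x)}
  have hlt : G₁ < G := deleteEdges_singleton_lt hux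
  have hG₁ : G₁.NoEdgeSeparates s {u, x, x, y} := hG.deleteEdge
  obtain hx₁ | hx₁ := em' (G₁.Reachable s x)
  · have hy₁ : G₁.Reachable s y := by obtain ⟨v, hv, h⟩ := hG s(u, x); grind
    obtain ⟨p, q, hpq⟩ := ih G₁ hlt hu hy₁ (hG₁.mono (by grind))
    refine ⟨(p.mapLe (deleteEdges_le _)).concat hux, q.mapLe (deleteEdges_le _), ?_⟩
    simp only [Walk.edges_concat, Walk.edges_mapLe_eq_edges, List.concat_eq_append,
      List.disjoint_append_left, List.singleton_disjoint]
    exact ⟨hpq, fun h => by simpa [G₁] using q.edges_subset_edgeSet h⟩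
  have hy₁ : G₁.Reachable s y := hy.deleteEdge_of_reachable_ends hu hx₁
  by_cases hsep : G₁.NoEdgeSeparates s {x, y}
  · obtain ⟨p, q, hpq⟩ := ih G₁ hlt hx₁ hy₁ hsep
    exact ⟨p.mapLe (deleteEdges_le _), q.mapLe (deleteEdges_le _), by simpa⟩
  obtain ⟨h, hhx, hhy⟩ : ∃ h, ¬ (G₁.deleteEdges {h}).Reachable s x ∧
      ¬ (G₁.deleteEdges {h}).Reachable s y := by
    simpa [NoEdgeSeparates] using hsep
  set G₂ := G₁.deleteEdges {h}
  obtain ⟨c, d, rfl, hcd, hc, hdx⟩ := hx₁.exists_crossing_of_not_reachable_deleteEdges hhx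
  have hd : ¬ G₂.Reachable s d := fun hd => hhx (hd.trans hdx)
  obtain ⟨r⟩ : G₂.Reachable d y := by
    rcases hy₁.deleteEdge_cases (a := c) (b := d) with h | ⟨-, h⟩ | ⟨h, -⟩
    exacts [absurd h hhy, h, absurd h hd]
  have hu₂ : G₂.Reachable s u := by obtain ⟨v, hv, h⟩ := hG₁ s(c, d); grind
  obtain ⟨p, q, hpq⟩ := ih G₂ ((deleteEdges_singleton_lt hcd).trans hlt) hu₂ hc
    (hG₁.deleteEdge.mono (by grind))
  exact exists_walks_disjoint_edges_of_cut ((deleteEdges_le _).trans (deleteEdges_le _)) hux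
    (G.deleteEdges_le _ hcd) (fun h => by simp [G₁, h] at hcd) (by simp)
    (by simp) p q hpq r hd

lemma not_reachable_deleteEdges_of_not_reachable_deleteEdges_deleteEdges {e f : Sym2 V}
    {a b s t : V} (hab : e = s(a, b)) (he : ¬ (G.deleteEdges {e}).Reachable s t)
    (hbt : (G.deleteEdges {e}).Reachable b t)
    (hf : ¬ ((G.deleteEdges {e}).deleteEdges {f}).Reachable s a) :
    ¬ (G.deleteEdges {f}).Reachable s t := by
  subst hab
  intro hst
  rw [deleteEdges_singleton_comm] at hf
  have hle := deleteEdges_mono (s := {s(a, b)}) (deleteEdges_le (G := G) {f})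
  rcases hst.deleteEdge_cases (a := a) (b := b) with h | ⟨h, -⟩ | ⟨h, -⟩
  exacts [he (h.mono hle), hf h, he ((h.mono hle).trans hbt)]

theorem Reachable.exists_walks_forall_mem_edges_not_reachable [Finite V] {s t : V}
    (h : G.Reachable s t) :
    ∃ p q : G.Walk s t, ∀ f ∈ p.edges, f ∈ q.edges → ¬ (G.deleteEdges {f}).Reachable s t := by
  induction G using WellFoundedLT.induction generalizing s t with | ind G ih => ?_
  by_cases hsep : ∀ e, (G.deleteEdges {e}).Reachable s t
  · obtain ⟨p, q, hpq⟩ := exists_walks_disjoint_edges h h fun g => ⟨t, by simp, hsep g⟩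
    exact ⟨p, q, fun f hp hq => (hpq hp hq).elim⟩
  obtain ⟨e, he⟩ := not_forall.mp hsep
  obtain ⟨a, b, rfl, hab, ha, hb⟩ := h.exists_crossing_of_not_reachable_deleteEdges he
  have hlt := deleteEdges_singleton_lt (e := s(a, b)) hab
  obtain ⟨p₁, q₁, h₁⟩ := ih _ hlt ha
  obtain ⟨p₂, q₂, h₂⟩ := ih _ hlt hb
  have hsb : ¬ (G.deleteEdges {s(a, b)}).Reachable s b := fun h => he (h.trans hb)
  have hle := G.deleteEdges_le {s(a, b)}
  refine ⟨(p₁.mapLe hle).append (.cons hab (p₂.mapLe hle)),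
    (q₁.mapLe hle).append (.cons hab (q₂.mapLe hle)), fun f hp hq => ?_⟩
  obtain rfl | hfe := eq_or_ne f s(a, b)
  · exact he
  simp only [Walk.edges_append, Walk.edges_cons, Walk.edges_mapLe_eq_edges, List.mem_append,
    List.mem_cons, hfe, false_or] at hp hq
  rcases hp with hp | hp <;> rcases hq with hq | hq
  · exact not_reachable_deleteEdges_of_not_reachable_deleteEdges_deleteEdges rfl he hb
      (h₁ f hp hq)
  · exact (p₁.disjoint_edges_of_not_reachable q₂ hsb hp hq).elim
  · exact (q₁.disjoint_edges_of_not_reachable p₂ hsb hq hp).elim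
  · exact fun hst => not_reachable_deleteEdges_of_not_reachable_deleteEdges_deleteEdges
      Sym2.eq_swap (mt Reachable.symm he) ha.symm (mt Reachable.symm (h₂ f hp hq)) hst.symm

end SimpleGraph

/-- Tunable-survivability characterization: in a graph with nonnegative edge
weights and `s`, `t` connected, the minimum over all pairs `(p, b)` of `s`-`t`
paths of the total weight of their common edges equals the total weight of the
bridges separating `s` from `t`, and the minimum is attained by a pair of paths
whose common edges are exactly the bridges. -/
theorem stmt_16 {V : Type*} [Fintype V] (G : SimpleGraph V)
    (w : Sym2 V → ℝ) (hw : ∀ e, 0 ≤ w e)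
    {s t : V} (h : G.Reachable s t) :
    IsLeast {x : ℝ | ∃ p b : G.Walk s t, p.IsPath ∧ b.IsPath ∧
        x = ∑ e ∈ p.edges.toFinset ∩ b.edges.toFinset, w e}
      (∑ e ∈ Finset.univ.filter
        (fun e => e ∈ G.edgeSet ∧ ¬ (G.deleteEdges {e}).Reachable s t), w e)
    ∧ ∃ p b : G.Walk s t, p.IsPath ∧ b.IsPath ∧
        p.edges.toFinset ∩ b.edges.toFinset
          = Finset.univ.filter
              (fun e => e ∈ G.edgeSet ∧ ¬ (G.deleteEdges {e}).Reachable s t) := by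
  set B := Finset.univ.filter fun e => e ∈ G.edgeSet ∧ ¬ (G.deleteEdges {e}).Reachable s t
  have hB : ∀ p q : G.Walk s t, B ⊆ p.edges.toFinset ∩ q.edges.toFinset := fun p q e he => by
    have he := (Finset.mem_filter.mp he).2.2
    simp [p.mem_edges_of_not_reachable_deleteEdges he, q.mem_edges_of_not_reachable_deleteEdges he]
  obtain ⟨p, q, hpq⟩ := h.exists_walks_forall_mem_edges_not_reachable
  have hpqB : p.bypass.edges.toFinset ∩ q.bypass.edges.toFinset = B := by
    refine subset_antisymm (fun f hf => ?_) (hB _ _)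
    simp only [Finset.mem_inter, List.mem_toFinset] at hf
    replace hf := And.imp (p.edges_bypass_subset_edges ·) (q.edges_bypass_subset_edges ·) hf
    exact Finset.mem_filter.mpr ⟨Finset.mem_univ _, p.edges_subset_edgeSet hf.1, hpq f hf.1 hf.2⟩
  refine ⟨⟨⟨p.bypass, q.bypass, p.bypass_isPath, q.bypass_isPath, by rw [hpqB]⟩, ?_⟩,
    p.bypass, q.bypass, p.bypass_isPath, q.bypass_isPath, hpqB⟩
  rintro x ⟨p', q', -, -, rfl⟩
  exact Finset.sum_le_sum_of_subset_of_nonneg (hB p' q') fun e _ _ => hw e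
end

section
/- For the offline 2-connection problem with shared backups (2-CESB) where the two sources coincide (s_1 = s_2 = s) and there is a feasible solution in which the backup paths share edges, there is also a feasible solution in which the two backup paths coincide on an initial segment from s to some node x and are edge-disjoint afterwards; i.e., feasibility is equivalent to the existence of either (i) four pairwise edge-disjoint paths s→t_1, s→t_1, s→t_2, s→t_2, or (ii) a node x and five pairwise edge-disjoint paths s→t_1, s→t_2, s→x, x→t_1, x→t_2. -/
/-!
Given a feasible routing `p₁, b₁, p₂, b₂`, shorten `b₁` to a path `c`. Follow `b₂` backwards from
`t₂` until it first meets `c`, at a vertex `x`. The piece of `b₂` from `x` to `t₂` meets `c` only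
in `x`, so it shares no edge with `c`; cutting the path `c` at `x` gives two edge-disjoint pieces
`s → x` and `x → t₁`. Together with `p₁` and `p₂` these are the five walks of (ii). Conversely,
in (ii) the backups are `s → x → t₁` and `s → x → t₂`, and (i) is a routing with disjoint backups.
-/

namespace SimpleGraph.Walk

variable {V : Type*} {G : SimpleGraph V}

lemma disjoint_edges_of_forall_mem_support_imp_eq {u v u' v' x : V} (p : G.Walk u v)
    (q : G.Walk u' v') (h : ∀ y ∈ p.support, y ∈ q.support → y = x) :
    p.edges.Disjoint q.edges := by
  intro e hp hq
  induction e using Sym2.ind with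
  | _ a b =>
    have ha : a = x := h a (p.fst_mem_support_of_mem_edges hp) (q.fst_mem_support_of_mem_edges hq)
    have hb : b = x := h b (p.snd_mem_support_of_mem_edges hp) (q.snd_mem_support_of_mem_edges hq)
    exact (p.adj_of_mem_edges hp).ne (ha.trans hb.symm)

/-- The part of `w` after its last visit to the support of `c`. -/
lemma exists_walk_from_support_edges_subset_disjoint {u v a b : V} (w : G.Walk a b)
    (c : G.Walk u v) (ha : a ∈ c.support) :
    ∃ x ∈ c.support, ∃ w' : G.Walk x b, w'.edges ⊆ w.edges ∧ w'.edges.Disjoint c.edges := by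
  classical
  have hmeet : {y ∈ c.support.toFinset | y ∈ w.reverse.support}.Nonempty :=
    ⟨a, by simp [ha]⟩
  obtain ⟨x, hxc, hxw, hfirst⟩ :=
    w.reverse.exists_mem_support_forall_mem_support_imp_eq _ hmeet
  refine ⟨x, List.mem_toFinset.mp hxc, (w.reverse.takeUntil x hxw).reverse, ?_, ?_⟩
  · intro e he
    simpa using w.reverse.edges_takeUntil_subset_edges hxw (by simpa using he)
  · refine disjoint_edges_of_forall_mem_support_imp_eq (x := x) _ c fun y hy hyc => ?_
    exact hfirst y (List.mem_toFinset.mpr hyc) (by simpa using hy)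

end SimpleGraph.Walk

open SimpleGraph

theorem exists_five_disjoint_walks_of_shared_backup {V : Type*} {G : SimpleGraph V}
    {s t₁ t₂ : V} (p₁ b₁ : G.Walk s t₁) (p₂ b₂ : G.Walk s t₂)
    (h₁ : p₁.edges.Disjoint b₁.edges) (h₂ : p₁.edges.Disjoint p₂.edges)
    (h₃ : p₁.edges.Disjoint b₂.edges) (h₄ : b₁.edges.Disjoint p₂.edges)
    (h₅ : p₂.edges.Disjoint b₂.edges) :
    ∃ (x : V) (q₁ : G.Walk s t₁) (q₂ : G.Walk s t₂) (q₃ : G.Walk s x)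
      (q₄ : G.Walk x t₁) (q₅ : G.Walk x t₂),
      List.Pairwise List.Disjoint [q₁.edges, q₂.edges, q₃.edges, q₄.edges, q₅.edges] := by
  classical
  set c := b₁.bypass
  have hc : c.edges ⊆ b₁.edges := b₁.edges_bypass_subset_edges
  obtain ⟨x, hx, q₅, hq₅, hq₅c⟩ :=
    b₂.exists_walk_from_support_edges_subset_disjoint c c.start_mem_support
  have hq₃ : (c.takeUntil x hx).edges ⊆ b₁.edges :=
    List.Subset.trans (c.edges_takeUntil_subset_edges hx) hc
  have hq₄ : (c.dropUntil x hx).edges ⊆ b₁.edges :=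
    List.Subset.trans (c.edges_dropUntil_subset_edges hx) hc
  refine ⟨x, p₁, p₂, c.takeUntil x hx, c.dropUntil x hx, q₅, ?_⟩
  simp only [List.pairwise_cons, List.forall_mem_cons, List.not_mem_nil, IsEmpty.forall_iff,
    implies_true, List.Pairwise.nil, and_true]
  refine ⟨⟨h₂, ?_, ?_, ?_⟩, ⟨?_, ?_, ?_⟩, ⟨?_, ?_⟩, ?_⟩
  · exact List.disjoint_of_subset_right hq₃ h₁
  · exact List.disjoint_of_subset_right hq₄ h₁
  · exact List.disjoint_of_subset_right hq₅ h₃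
  · exact (List.disjoint_of_subset_left hq₃ h₄).symm
  · exact (List.disjoint_of_subset_left hq₄ h₄).symm
  · exact List.disjoint_of_subset_right hq₅ h₅
  · exact b₁.bypass_isPath.isTrail.disjoint_edges_takeUntil_dropUntil hx
  · exact (List.disjoint_of_subset_right (c.edges_takeUntil_subset_edges hx) hq₅c).symm
  · exact (List.disjoint_of_subset_right (c.edges_dropUntil_subset_edges hx) hq₅c).symm

theorem stmt_17_general {V : Type*} (G : SimpleGraph V) (s t₁ t₂ : V) :
    (∃ (p₁ b₁ : G.Walk s t₁) (p₂ b₂ : G.Walk s t₂),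
        List.Disjoint p₁.edges b₁.edges ∧
        List.Disjoint p₁.edges p₂.edges ∧
        List.Disjoint p₁.edges b₂.edges ∧
        List.Disjoint b₁.edges p₂.edges ∧
        List.Disjoint p₂.edges b₂.edges)
    ↔ ((∃ (p₁ q₁ : G.Walk s t₁) (p₂ q₂ : G.Walk s t₂),
          List.Pairwise List.Disjoint
            [p₁.edges, q₁.edges, p₂.edges, q₂.edges])
      ∨ (∃ (x : V) (q₁ : G.Walk s t₁) (q₂ : G.Walk s t₂) (q₃ : G.Walk s x)
            (q₄ : G.Walk x t₁) (q₅ : G.Walk x t₂),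
          List.Pairwise List.Disjoint
            [q₁.edges, q₂.edges, q₃.edges, q₄.edges, q₅.edges])) := by
  refine ⟨fun ⟨p₁, b₁, p₂, b₂, h₁, h₂, h₃, h₄, h₅⟩ =>
    Or.inr (exists_five_disjoint_walks_of_shared_backup p₁ b₁ p₂ b₂ h₁ h₂ h₃ h₄ h₅), ?_⟩
  simp only [List.pairwise_cons, List.forall_mem_cons, List.not_mem_nil, IsEmpty.forall_iff,
    implies_true, List.Pairwise.nil, and_true]
  rintro (⟨p₁, q₁, p₂, q₂, ⟨h₁₂, h₁₃, h₁₄⟩, ⟨h₂₃, -⟩, h₃₄⟩ |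
    ⟨x, q₁, q₂, q₃, q₄, q₅, ⟨h₁₂, h₁₃, h₁₄, h₁₅⟩, ⟨h₂₃, h₂₄, h₂₅⟩, -, -⟩)
  · exact ⟨p₁, q₁, p₂, q₂, h₁₂, h₁₃, h₁₄, h₂₃, h₃₄⟩
  · refine ⟨q₁, q₃.append q₄, q₂, q₃.append q₅, ?_, h₁₂, ?_, ?_, ?_⟩ <;>
      simp only [Walk.edges_append, List.disjoint_append_left, List.disjoint_append_right]
    exacts [⟨h₁₃, h₁₄⟩, ⟨h₁₃, h₁₅⟩, ⟨h₂₃.symm, h₂₄.symm⟩, ⟨h₂₃, h₂₅⟩]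

/-- Offline 2-CESB with a common source `s₁ = s₂ = s`: the problem (find paths
`p₁, b₁ : s → t₁` and `p₂, b₂ : s → t₂`, pairwise edge-disjoint except possibly
`b₁` with `b₂`) is feasible iff either (i) there are four pairwise edge-disjoint
paths `s → t₁`, `s → t₁`, `s → t₂`, `s → t₂`, or (ii) there are a node `x` and
five pairwise edge-disjoint paths `s → t₁`, `s → t₂`, `s → x`, `x → t₁`,
`x → t₂` (the two backup paths coincide on the initial segment `s → x` and are
edge-disjoint afterwards). -/
theorem stmt_17 {V : Type*} (G : SimpleGraph V) (s t₁ t₂ : V) (hne : t₁ ≠ t₂) :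
    (∃ (p₁ b₁ : G.Walk s t₁) (p₂ b₂ : G.Walk s t₂),
        List.Disjoint p₁.edges b₁.edges ∧
        List.Disjoint p₁.edges p₂.edges ∧
        List.Disjoint p₁.edges b₂.edges ∧
        List.Disjoint b₁.edges p₂.edges ∧
        List.Disjoint p₂.edges b₂.edges)
    ↔ ((∃ (p₁ q₁ : G.Walk s t₁) (p₂ q₂ : G.Walk s t₂),
          List.Pairwise List.Disjoint
            [p₁.edges, q₁.edges, p₂.edges, q₂.edges])
      ∨ (∃ (x : V) (q₁ : G.Walk s t₁) (q₂ : G.Walk s t₂) (q₃ : G.Walk s x)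
            (q₄ : G.Walk x t₁) (q₅ : G.Walk x t₂),
          List.Pairwise List.Disjoint
            [q₁.edges, q₂.edges, q₃.edges, q₄.edges, q₅.edges])) :=
  stmt_17_general G s t₁ t₂
end
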